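/- Let n ≥ 3 and k ≥ 2, and let Pⁿₖ denote the Legendre polynomial of dimension n and degree k normalized by Pⁿₖ(1) = 1. Then (n-1)/((k-1)(k+n-1)) · A₂Pⁿₖ = (k(k+n-3)/(2k+n-2))·Pⁿ⁺²ₖ₋₂ - ((k+1)(k+n-2)/(2k+n-2))·Pⁿ⁺²ₖ, where A₂ψ(t) = (1-t²)ψ''(t) + ψ(t) - tψ'(t). -/

import Mathlib

/-!
Let `L` be the Legendre operator of dimension `n + 2` and `λ = k(k+n-2)`. Differentiating the
equation of `P = Pⁿₖ` shows that `P'` solves the equation of dimension `n + 2`; with the equation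
of `P` itself this gives `L P = -λP - 2tP'` and `L(tP') = (2n-4-λ) tP' - 2λP`. So the plane
spanned by `P` and `tP'` is `L`-invariant, with eigenvectors `tP' - kP` and `tP' + (k+n-2)P` of
eigenvalues `-(k-2)(k+n-2)` and `-k(k+n)`. A polynomial solution of a Legendre equation vanishing
at `1` vanishes (its derivative solves the next one and vanishes at `1` too), so these
eigenvectors are the multiples of `Pⁿ⁺²ₖ₋₂` and `Pⁿ⁺²ₖ` fixed by their values at `1`, computed
from `(n-1)P'(1) = λ`. Finally the equation gives `A₂P = (n-2)tP' - (λ-1)P`, which is expanded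
in the two eigenvectors.
-/

/-- `p` is the Legendre polynomial of dimension `n` and degree `k`: it is a polynomial
function, normalized by `p 1 = 1`, satisfying the Legendre ODE
`(1-t²)y'' - (n-1)t·y' + k(k+n-2)y = 0`. -/
def IsLegendre (n k : ℕ) (p : ℝ → ℝ) : Prop :=
  (∃ q : Polynomial ℝ, ∀ t, p t = q.eval t) ∧ p 1 = 1 ∧
    ∀ t : ℝ, (1 - t ^ 2) * iteratedDeriv 2 p t - ((n : ℝ) - 1) * t * deriv p t +
      (k : ℝ) * ((k : ℝ) + (n : ℝ) - 2) * p t = 0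

open Polynomial

noncomputable def legendreOp (n : ℝ) (q : ℝ[X]) : ℝ[X] :=
  (1 - X ^ 2) * derivative (derivative q) - C (n - 1) * X * derivative q

section identities

variable (n : ℝ) (p q : ℝ[X])

theorem legendreOp_add :
    legendreOp n (p + q) = legendreOp n p + legendreOp n q := by
  simp only [legendreOp, derivative_add]
  ring

theorem legendreOp_sub :
    legendreOp n (p - q) = legendreOp n p - legendreOp n q := by
  simp only [legendreOp, derivative_sub]
  ring

theorem legendreOp_C_mul (c : ℝ) :
    legendreOp n (C c * q) = C c * legendreOp n q := by
  simp only [legendreOp, derivative_C_mul]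
  ring

theorem legendreOp_add_two :
    legendreOp (n + 2) q = legendreOp n q - 2 * X * derivative q := by
  simp only [legendreOp, C_sub, C_add, C_ofNat, C_1]
  ring

theorem legendreOp_derivative :
    legendreOp (n + 2) (derivative q) =
      derivative (legendreOp n q) + C (n - 1) * derivative q := by
  simp only [legendreOp, derivative_mul, derivative_sub, derivative_X_sq, derivative_one,
    derivative_C, derivative_X, C_sub, C_add, C_ofNat, C_1]
  ring

theorem legendreOp_X_mul :
    legendreOp n (X * q) =
      X * legendreOp n q + 2 * (1 - X ^ 2) * derivative q - C (n - 1) * X * q := by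
  simp only [legendreOp, derivative_mul, derivative_add, derivative_X, one_mul]
  ring

theorem eval_one_legendreOp :
    (legendreOp n q).eval 1 = -(n - 1) * (derivative q).eval 1 := by
  simp [legendreOp]
  ring

end identities

section eigenfunctions

variable {n μ : ℝ} {p q : ℝ[X]}

theorem mul_eval_one_derivative (h : legendreOp n q = -C μ * q) :
    (n - 1) * (derivative q).eval 1 = μ * q.eval 1 := by
  have h1 := congrArg (eval 1) h
  rw [eval_one_legendreOp, eval_mul, eval_neg, eval_C] at h1
  linarith

theorem legendreOp_derivative_eq (h : legendreOp n q = -C μ * q) :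
    legendreOp (n + 2) (derivative q) = -C (μ - (n - 1)) * derivative q := by
  rw [legendreOp_derivative, h, derivative_mul, derivative_neg, derivative_C]
  simp only [C_sub, C_1]
  ring

theorem eq_zero_of_legendreOp_eq (hn : 1 < n) (h : legendreOp n q = -C μ * q)
    (h1 : q.eval 1 = 0) : q = 0 := by
  induction hd : q.natDegree using Nat.strong_induction_on generalizing n μ q with
  | _ d ih =>
  have hq' : derivative q = 0 := by
    by_contra hne
    refine hne (ih _ ?_ (by linarith) (legendreOp_derivative_eq h) ?_ rfl)
    · exact hd ▸ natDegree_derivative_lt (derivative_ne_zero.1 hne)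
    · have h' := mul_eval_one_derivative h
      rw [h1, mul_zero] at h'
      exact (mul_eq_zero.1 h').resolve_left (by linarith)
  rw [eq_C_of_derivative_eq_zero hq'] at h1 ⊢
  simpa using h1

theorem eq_C_eval_one_mul_of_legendreOp_eq (hn : 1 < n) (hp : legendreOp n p = -C μ * p)
    (hp1 : p.eval 1 = 1) (hq : legendreOp n q = -C μ * q) : q = C (q.eval 1) * p := by
  rw [← sub_eq_zero]
  refine eq_zero_of_legendreOp_eq hn (μ := μ) ?_ (by simp [hp1])
  rw [legendreOp_sub, legendreOp_C_mul, hp, hq]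
  ring

theorem legendreOp_add_two_X_mul_derivative (h : legendreOp n q = -C μ * q) :
    legendreOp (n + 2) (X * derivative q) =
      C (2 * n - 4 - μ) * (X * derivative q) - C (2 * μ) * q := by
  have h2 : (1 - X ^ 2) * derivative (derivative q) = C (n - 1) * X * derivative q - C μ * q := by
    rw [legendreOp] at h
    linear_combination h
  rw [legendreOp_X_mul, legendreOp_derivative_eq h]
  simp only [C_sub, C_add, C_mul, C_ofNat, C_1] at h2 ⊢
  linear_combination 2 * h2

theorem legendreOp_add_two_X_mul_derivative_sub {k : ℝ}
    (h : legendreOp n q = -C (k * (k + n - 2)) * q) :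
    legendreOp (n + 2) (X * derivative q - C k * q) =
      -C ((k - 2) * (k + n - 2)) * (X * derivative q - C k * q) := by
  rw [legendreOp_sub, legendreOp_C_mul, legendreOp_add_two_X_mul_derivative h,
    legendreOp_add_two, h]
  simp only [C_sub, C_add, C_mul, C_ofNat]
  ring

theorem legendreOp_add_two_X_mul_derivative_add {k : ℝ}
    (h : legendreOp n q = -C (k * (k + n - 2)) * q) :
    legendreOp (n + 2) (X * derivative q + C (k + n - 2) * q) =
      -C (k * (k + n)) * (X * derivative q + C (k + n - 2) * q) := by
  rw [legendreOp_add, legendreOp_C_mul, legendreOp_add_two_X_mul_derivative h,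
    legendreOp_add_two, h]
  simp only [C_sub, C_add, C_mul, C_ofNat]
  ring

end eigenfunctions

theorem iteratedDeriv_two_eval (q : ℝ[X]) (t : ℝ) :
    iteratedDeriv 2 (fun x => q.eval x) t = (derivative (derivative q)).eval t := by
  have hderiv : deriv (fun x => q.eval x) = fun x => (derivative q).eval x :=
    funext fun _ => Polynomial.deriv _
  rw [iteratedDeriv_succ, iteratedDeriv_one, hderiv, Polynomial.deriv]

theorem eval_legendreOp (n : ℝ) (q : ℝ[X]) (t : ℝ) :
    (legendreOp n q).eval t = (1 - t ^ 2) * iteratedDeriv 2 (fun x => q.eval x) t -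
      (n - 1) * t * deriv (fun x => q.eval x) t := by
  simp [legendreOp, iteratedDeriv_two_eval, Polynomial.deriv]

theorem isLegendre_eval_iff {n k : ℕ} {q : ℝ[X]} :
    IsLegendre n k (fun t => q.eval t) ↔
      q.eval 1 = 1 ∧ legendreOp n q = -C (k * (k + n - 2 : ℝ)) * q := by
  constructor
  · rintro ⟨-, h1, hode⟩
    refine ⟨h1, Polynomial.funext fun t => ?_⟩
    rw [eval_legendreOp, eval_mul, eval_neg, eval_C]
    linear_combination hode t
  · rintro ⟨h1, h⟩
    refine ⟨⟨q, fun _ => rfl⟩, h1, fun t => ?_⟩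
    have ht := congrArg (eval t) h
    rw [eval_legendreOp, eval_mul, eval_neg, eval_C] at ht
    linear_combination ht

theorem IsLegendre.exists_eq_eval {n k : ℕ} {P : ℝ → ℝ} (hP : IsLegendre n k P) :
    ∃ p : ℝ[X], P = fun t => p.eval t :=
  let ⟨p, hp⟩ := hP.1
  ⟨p, funext hp⟩

theorem IsLegendre.mul_deriv_sub_eq {n k : ℕ} {P Q : ℝ → ℝ} (hk : 2 ≤ k)
    (hP : IsLegendre n k P) (hQ : IsLegendre (n + 2) (k - 2) Q) (t : ℝ) :
    k * (k - 1) * Q t = (n - 1) * (t * deriv P t - k * P t) := by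
  obtain ⟨p, rfl⟩ := hP.exists_eq_eval
  obtain ⟨q, rfl⟩ := hQ.exists_eq_eval
  obtain ⟨hp1, hp⟩ := isLegendre_eval_iff.1 hP
  obtain ⟨hq1, hq⟩ := isLegendre_eval_iff.1 hQ
  push_cast [Nat.cast_sub hk] at hq
  rw [show (k : ℝ) - 2 + (n + 2) - 2 = k + n - 2 by ring] at hq
  have hs := eq_C_eval_one_mul_of_legendreOp_eq (by norm_cast; omega) hq hq1
    (legendreOp_add_two_X_mul_derivative_sub hp)
  have h1 := mul_eval_one_derivative hp
  have ht := congrArg (eval t) hs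
  simp only [eval_sub, eval_mul, eval_X, eval_C, hp1, one_mul, mul_one] at h1 ht
  rw [Polynomial.deriv]
  linear_combination -(n - 1 : ℝ) * ht - q.eval t * h1

theorem IsLegendre.mul_deriv_add_eq {n k : ℕ} {P R : ℝ → ℝ}
    (hP : IsLegendre n k P) (hR : IsLegendre (n + 2) k R) (t : ℝ) :
    (k + n - 2) * (k + n - 1) * R t = (n - 1) * (t * deriv P t + (k + n - 2) * P t) := by
  obtain ⟨p, rfl⟩ := hP.exists_eq_eval
  obtain ⟨r, rfl⟩ := hR.exists_eq_eval
  obtain ⟨hp1, hp⟩ := isLegendre_eval_iff.1 hP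
  obtain ⟨hr1, hr⟩ := isLegendre_eval_iff.1 hR
  push_cast at hr
  rw [show (k : ℝ) + (n + 2) - 2 = k + n by ring] at hr
  have hs := eq_C_eval_one_mul_of_legendreOp_eq (by norm_cast; omega) hr hr1
    (legendreOp_add_two_X_mul_derivative_add hp)
  have h1 := mul_eval_one_derivative hp
  have ht := congrArg (eval t) hs
  simp only [eval_add, eval_mul, eval_X, eval_C, hp1, one_mul, mul_one] at h1 ht
  rw [Polynomial.deriv]
  linear_combination -(n - 1 : ℝ) * ht - r.eval t * h1

theorem legendre_A2_identity_general (n k : ℕ) (hk : 2 ≤ k)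
    (P Q R : ℝ → ℝ) (hP : IsLegendre n k P) (hQ : IsLegendre (n + 2) (k - 2) Q)
    (hR : IsLegendre (n + 2) k R) :
    ∀ t : ℝ,
      (((n : ℝ) - 1) / (((k : ℝ) - 1) * ((k : ℝ) + (n : ℝ) - 1))) *
          ((1 - t ^ 2) * iteratedDeriv 2 P t + P t - t * deriv P t) =
        ((k : ℝ) * ((k : ℝ) + (n : ℝ) - 3) / (2 * (k : ℝ) + (n : ℝ) - 2)) * Q t -
          (((k : ℝ) + 1) * ((k : ℝ) + (n : ℝ) - 2) / (2 * (k : ℝ) + (n : ℝ) - 2)) * R t := by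
  intro t
  have hk' : (2 : ℝ) ≤ k := by exact_mod_cast hk
  have hn : (0 : ℝ) ≤ n := n.cast_nonneg
  have hPt := hP.2.2 t
  have hQt := hP.mul_deriv_sub_eq hk hQ t
  have hRt := hP.mul_deriv_add_eq hR t
  have hk1 : (k : ℝ) - 1 ≠ 0 := by linarith
  have hkn1 : (k : ℝ) + n - 1 ≠ 0 := by linarith
  -- the form into which `field_simp` normalizes the denominator `2 * k + n - 2`
  have hD : (k : ℝ) * 2 + n - 2 ≠ 0 := by linarith
  linear_combination (norm := skip)
    ((n : ℝ) - 1) / ((k - 1) * (k + n - 1)) * hPt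
      - (k + n - 3) / ((k - 1) * (2 * k + n - 2)) * hQt
      + (k + 1) / ((k + n - 1) * (2 * k + n - 2)) * hRt
  field_simp
  ring

/-- For `n ≥ 3`, `k ≥ 2`, with `P = Pⁿₖ`, `Q = Pⁿ⁺²ₖ₋₂`, `R = Pⁿ⁺²ₖ`:
`(n-1)/((k-1)(k+n-1)) · A₂Pⁿₖ = (k(k+n-3)/(2k+n-2))·Pⁿ⁺²ₖ₋₂ - ((k+1)(k+n-2)/(2k+n-2))·Pⁿ⁺²ₖ`,
where `A₂ψ(t) = (1-t²)ψ''(t) + ψ(t) - tψ'(t)`. -/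
theorem legendre_A2_identity (n k : ℕ) (hn : 3 ≤ n) (hk : 2 ≤ k)
    (P Q R : ℝ → ℝ) (hP : IsLegendre n k P) (hQ : IsLegendre (n + 2) (k - 2) Q)
    (hR : IsLegendre (n + 2) k R) :
    ∀ t : ℝ,
      (((n : ℝ) - 1) / (((k : ℝ) - 1) * ((k : ℝ) + (n : ℝ) - 1))) *
          ((1 - t ^ 2) * iteratedDeriv 2 P t + P t - t * deriv P t) =
        ((k : ℝ) * ((k : ℝ) + (n : ℝ) - 3) / (2 * (k : ℝ) + (n : ℝ) - 2)) * Q t -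
          (((k : ℝ) + 1) * ((k : ℝ) + (n : ℝ) - 2) / (2 * (k : ℝ) + (n : ℝ) - 2)) * R t :=
  legendre_A2_identity_general n k hk P Q R hP hQ hR
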